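/- Let G and H be connected graphs of orders n, m ≥ 2 with D(G) = k and D(H) = k'. If k'' = max{k, k'} and D(G ∘ H) = k'', then ρ_{k''}(G ∘ H) ≤ ρ_k(G) + n·ρ_{k'}(H). -/

import Mathlib

/-!
Label `G` by a `D(G)`-distinguishing labeling and every copy of `H` by one and the same
`D(H)`-distinguishing labeling, after moving a smallest class of each to a common label.
By a degree count, an automorphism of `G ∘ H` preserving the labels maps the base copy of `G`
into itself, so it restricts to a label-preserving automorphism of `G` and fixes `G` pointwise;
then it maps each copy of `H` into itself, which it fixes as well. The common label class has
`ρ(G) + n ρ(H)` vertices.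
-/

open SimpleGraph

/-- A labeling `f : V → Fin d` is `d`-distinguishing if the only automorphism
preserving all labels is the identity. -/
def IsDistinguishing {V : Type*} (G : SimpleGraph V) (d : ℕ) (f : V → Fin d) : Prop :=
  ∀ φ : G ≃g G, (∀ v, f (φ v) = f v) → ∀ v, φ v = v

/-- The distinguishing number `D(G)`. -/
noncomputable def distNum {V : Type*} (G : SimpleGraph V) : ℕ :=
  sInf {d | ∃ f : V → Fin d, IsDistinguishing G d f}

/-- The cost `ρ_d(G)`: the minimum size of a label class in a
`d`-distinguishing labeling of `G`. -/
noncomputable def cost {V : Type*} (G : SimpleGraph V) [Fintype V] (d : ℕ) : ℕ :=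
  sInf {k | ∃ (f : V → Fin d) (i : Fin d), IsDistinguishing G d f ∧
    k = (Finset.univ.filter (fun v => f v = i)).card}

/-- `S` is a determining set for `G` if automorphisms agreeing on `S` agree everywhere. -/
def IsDeterminingSet {V : Type*} (G : SimpleGraph V) (S : Set V) : Prop :=
  ∀ φ ψ : G ≃g G, (∀ v ∈ S, φ v = ψ v) → ∀ v, φ v = ψ v

/-- The determining number `Det(G)`. -/
noncomputable def detNum {V : Type*} (G : SimpleGraph V) [Fintype V] : ℕ :=
  sInf {k | ∃ S : Finset V, IsDeterminingSet G ↑S ∧ S.card = k}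

/-- The corona product `G ∘ H`: one copy of `G` and, for each vertex `v` of `G`,
a copy of `H` all of whose vertices are joined to `v`. -/
def corona {V W : Type*} (G : SimpleGraph V) (H : SimpleGraph W) :
    SimpleGraph (V ⊕ V × W) :=
  SimpleGraph.fromRel (fun a b =>
    match a, b with
    | .inl u, .inl v => G.Adj u v
    | .inl u, .inr (v, _) => u = v
    | .inr (u, w), .inr (v, w') => u = v ∧ H.Adj w w'
    | _, _ => False)

open Finset

namespace IsDistinguishing

variable {V : Type*} {G : SimpleGraph V} {d : ℕ} {f : V → Fin d}

theorem comp_injective (hf : IsDistinguishing G d f) {d' : ℕ} {g : Fin d → Fin d'}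
    (hg : Function.Injective g) : IsDistinguishing G d' (g ∘ f) :=
  fun φ hφ => hf φ fun v => hg (hφ v)

/-- A label-preserving automorphism of `G'` that maps a copy of `G` into itself induces a
label-preserving automorphism of `G`, which must be trivial. -/
theorem apply_eq_self_of_mapsTo_range [Finite V] (hf : IsDistinguishing G d f)
    {V' : Type*} {G' : SimpleGraph V'} (e : G ↪g G') {F : V' → Fin d}
    (hF : ∀ v, F (e v) = f v) (φ : G' ≃g G') (hφF : ∀ x, F (φ x) = F x)
    (hφe : ∀ v, φ (e v) ∈ Set.range e) (v : V) : φ (e v) = e v := by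
  choose σ hσ using hφe
  have hσinj : Function.Injective σ := fun a b hab =>
    e.injective (φ.injective (by rw [← hσ a, ← hσ b, hab]))
  let ψ : G ≃g G :=
    { toEquiv := Equiv.ofBijective σ (Finite.injective_iff_bijective.mp hσinj)
      map_rel_iff' := fun {a b} => by
        change G.Adj (σ a) (σ b) ↔ G.Adj a b
        rw [← e.map_adj_iff, hσ, hσ, φ.map_adj_iff, e.map_adj_iff] }
  have hψ : ∀ u, f (ψ u) = f u := fun u => by
    change f (σ u) = f u
    rw [← hF, hσ, hφF, hF]
  rw [← hσ v]
  exact congrArg e (hf ψ hψ v)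

end IsDistinguishing

theorem exists_isDistinguishing_distNum {V : Type*} [Finite V] (G : SimpleGraph V) :
    ∃ f : V → Fin (distNum G), IsDistinguishing G (distNum G) f :=
  Nat.sInf_mem (s := {d | ∃ f : V → Fin d, IsDistinguishing G d f})
    ⟨Nat.card V, Finite.equivFin V, fun _ hφ v => (Finite.equivFin V).injective (hφ v)⟩

theorem distNum_pos {V : Type*} [Finite V] [Nonempty V] (G : SimpleGraph V) : 0 < distNum G :=
  (exists_isDistinguishing_distNum G).choose (Classical.arbitrary V) |>.pos

theorem exists_isDistinguishing_card_filter_eq_cost {V : Type*} [Fintype V] [Nonempty V]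
    {G : SimpleGraph V} {k d : ℕ} (hk : ∃ f : V → Fin k, IsDistinguishing G k f) (hkd : k ≤ d)
    (j : Fin d) :
    ∃ f : V → Fin d, IsDistinguishing G d f ∧ #{v | f v = j} = cost G k := by
  obtain ⟨f, hf⟩ := hk
  obtain ⟨f₀, i, hf₀, hcost⟩ : ∃ (f₀ : V → Fin k) (i : Fin k), IsDistinguishing G k f₀ ∧
      cost G k = #{v | f₀ v = i} :=
    Nat.sInf_mem (s := {c | ∃ (f : V → Fin k) (i : Fin k), IsDistinguishing G k f ∧
      c = #{v | f v = i}}) ⟨_, f, f (Classical.arbitrary V), hf, rfl⟩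
  let g : Fin k → Fin d := Equiv.swap (Fin.castLE hkd i) j ∘ Fin.castLE hkd
  have hg : Function.Injective g := (Equiv.injective _).comp (Fin.castLE_injective hkd)
  refine ⟨g ∘ f₀, hf₀.comp_injective hg, ?_⟩
  rw [hcost]
  congr 1
  refine Finset.filter_congr fun v _ => ?_
  change g (f₀ v) = j ↔ _
  rw [← hg.eq_iff (b := i)]
  simp [g]

section Corona

variable {V W : Type*} {G : SimpleGraph V} {H : SimpleGraph W}

@[simp]
theorem corona_adj_inl_inl {u v : V} : (corona G H).Adj (.inl u) (.inl v) ↔ G.Adj u v := by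
  simp only [corona, fromRel_adj, ne_eq, Sum.inl.injEq]
  exact ⟨fun h => h.2.elim id fun h => h.symm, fun h => ⟨h.ne, .inl h⟩⟩

@[simp]
theorem corona_adj_inl_inr {u v : V} {w : W} :
    (corona G H).Adj (.inl u) (.inr (v, w)) ↔ u = v := by
  simp [corona]

@[simp]
theorem corona_adj_inr_inr {u v : V} {w w' : W} :
    (corona G H).Adj (.inr (u, w)) (.inr (v, w')) ↔ u = v ∧ H.Adj w w' := by
  simp only [corona, fromRel_adj]
  constructor
  · rintro ⟨_, ⟨rfl, h⟩ | ⟨rfl, h⟩⟩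
    exacts [⟨rfl, h⟩, ⟨rfl, h.symm⟩]
  · rintro ⟨rfl, h⟩
    exact ⟨by simp [h.ne], .inl ⟨rfl, h⟩⟩

@[simp]
theorem corona_adj_inr_inl {u v : V} {w : W} :
    (corona G H).Adj (.inr (v, w)) (.inl u) ↔ v = u := by
  rw [adj_comm, corona_adj_inl_inr, eq_comm]

variable (G H) in
def coronaInl : G ↪g corona G H := ⟨⟨Sum.inl, Sum.inl_injective⟩, corona_adj_inl_inl⟩

variable (G H) in
def coronaInr (v : V) : H ↪g corona G H :=
  ⟨⟨fun w => .inr (v, w), Sum.inr_injective.comp (Prod.mk_right_injective v)⟩, by simp⟩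

theorem card_add_one_le_card_neighborSet_corona_inl [Finite V] [Finite W] {v u : V}
    (hvu : G.Adj v u) : Nat.card W + 1 ≤ Nat.card ((corona G H).neighborSet (.inl v)) := by
  let e : Option W → (corona G H).neighborSet (.inl v) :=
    fun o => o.elim ⟨.inl u, by simpa⟩ fun w => ⟨.inr (v, w), by simp⟩
  have he : Function.Injective e := by
    rintro (_ | _) (_ | _) h <;> simp_all [e]
  simpa using Nat.card_le_card_of_injective e he

theorem card_neighborSet_corona_inr_le [Finite V] [Finite W] (v : V) (w : W) :
    Nat.card ((corona G H).neighborSet (.inr (v, w))) ≤ Nat.card W := by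
  let e : (corona G H).neighborSet (.inr (v, w)) → W :=
    fun x => Sum.elim (fun _ => w) Prod.snd x.1
  have he : Function.Injective e := by
    rintro ⟨_ | ⟨u₁, w₁⟩, h₁⟩ ⟨_ | ⟨u₂, w₂⟩, h₂⟩ h <;>
      simp only [mem_neighborSet, corona_adj_inr_inl, corona_adj_inr_inr] at h₁ h₂ <;>
      simp_all [e]
  exact Nat.card_le_card_of_injective e he

/-- A degree count: when `G` has no isolated vertex, each vertex of the base copy of `G` has
degree at least `|W| + 1` in `G ∘ H`, each vertex of a copy of `H` at most `|W|`. -/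
theorem corona_iso_apply_inl [Finite V] [Finite W] (hG : ∀ v, ∃ u, G.Adj v u)
    (φ : corona G H ≃g corona G H) (v : V) : ∃ u, φ (.inl v) = .inl u := by
  obtain ⟨u, hvu⟩ := hG v
  rcases h : φ (.inl v) with u' | ⟨u', w⟩
  · exact ⟨u', rfl⟩
  · have hcard := Nat.card_congr (φ.mapNeighborSet (.inl v))
    rw [h] at hcard
    have := card_add_one_le_card_neighborSet_corona_inl (H := H) hvu
    have := card_neighborSet_corona_inr_le (G := G) (H := H) u' w
    omega

theorem corona_iso_apply_inr (φ : corona G H ≃g corona G H) (hφ : ∀ v, φ (.inl v) = .inl v)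
    (v : V) (w : W) : ∃ w', φ (.inr (v, w)) = .inr (v, w') := by
  rcases h : φ (.inr (v, w)) with u | ⟨u, w'⟩
  · have := φ.injective ((hφ u).trans h.symm)
    simp at this
  · have hadj : (corona G H).Adj (φ (.inl v)) (φ (.inr (v, w))) :=
      φ.map_adj_iff.mpr (corona_adj_inl_inr.mpr rfl)
    rw [hφ, h, corona_adj_inl_inr] at hadj
    exact ⟨w', by rw [hadj]⟩

theorem isDistinguishing_corona [Finite V] [Finite W] (hG : ∀ v, ∃ u, G.Adj v u) {d : ℕ}
    {fG : V → Fin d} {fH : W → Fin d} (hfG : IsDistinguishing G d fG)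
    (hfH : IsDistinguishing H d fH) :
    IsDistinguishing (corona G H) d (Sum.elim fG (fH ∘ Prod.snd)) := by
  intro φ hφ
  have hinl : ∀ v, φ (.inl v) = .inl v :=
    hfG.apply_eq_self_of_mapsTo_range (coronaInl G H) (fun _ => rfl) φ hφ fun v =>
      (corona_iso_apply_inl hG φ v).imp fun _ h => h.symm
  have hinr : ∀ v w, φ (.inr (v, w)) = .inr (v, w) := fun v =>
    hfH.apply_eq_self_of_mapsTo_range (coronaInr G H v) (fun _ => rfl) φ hφ fun w =>
      (corona_iso_apply_inr φ hinl v w).imp fun _ h => h.symm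
  rintro (v | ⟨v, w⟩)
  exacts [hinl v, hinr v w]

end Corona

theorem card_filter_sumElim_eq {V W α : Type*} [Fintype V] [Fintype W] [DecidableEq α]
    (f : V → α) (g : W → α) (a : α) :
    #{x | Sum.elim f (g ∘ Prod.snd : V × W → α) x = a} =
      #{v | f v = a} + Fintype.card V * #{w | g w = a} := by
  have hsnd : Fintype.card {p : V × W // g p.2 = a} = Fintype.card V * #{w | g w = a} := by
    rw [← Fintype.card_subtype, ← Fintype.card_prod]
    exact Fintype.card_congr
      ⟨fun p => (p.1.1, ⟨p.1.2, p.2⟩), fun q => ⟨(q.1, q.2.1), q.2.2⟩, fun _ => rfl, fun _ => rfl⟩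
  rw [← Fintype.card_subtype, Fintype.card_congr Equiv.subtypeSum, Fintype.card_sum,
    Fintype.card_subtype]
  exact congrArg (_ + ·) hsnd

theorem stmt_16_general {V W : Type*} [Fintype V] [Fintype W]
    (G : SimpleGraph V) (H : SimpleGraph W) (n m k k' : ℕ)
    (hn : Fintype.card V = n) (hm : Fintype.card W = m)
    (hn2 : 2 ≤ n) (hm2 : 2 ≤ m) (hG : G.Connected)
    (hk : distNum G = k) (hk' : distNum H = k') :
    cost (corona G H) (max k k') ≤ cost G k + n * cost H k' := by
  subst hn hm hk hk'
  have : Nontrivial V := Fintype.one_lt_card_iff_nontrivial.mp hn2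
  have : Nonempty W := Fintype.card_pos_iff.mp (by omega)
  let j : Fin (max (distNum G) (distNum H)) := ⟨0, lt_max_of_lt_left (distNum_pos G)⟩
  obtain ⟨fG, hfG, hcG⟩ := exists_isDistinguishing_card_filter_eq_cost
    (exists_isDistinguishing_distNum G) (le_max_left _ _) j
  obtain ⟨fH, hfH, hcH⟩ := exists_isDistinguishing_card_filter_eq_cost
    (exists_isDistinguishing_distNum H) (le_max_right _ _) j
  calc cost (corona G H) (max (distNum G) (distNum H))
      ≤ #{x | Sum.elim fG (fH ∘ Prod.snd : V × W → _) x = j} :=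
        Nat.sInf_le
          ⟨_, j, isDistinguishing_corona hG.preconnected.exists_adj_of_nontrivial hfG hfH, rfl⟩
    _ = cost G (distNum G) + Fintype.card V * cost H (distNum H) := by
        rw [card_filter_sumElim_eq, hcG, hcH]

theorem stmt_16 {V W : Type*} [Fintype V] [Fintype W]
    (G : SimpleGraph V) (H : SimpleGraph W) (n m k k' : ℕ)
    (hn : Fintype.card V = n) (hm : Fintype.card W = m)
    (hn2 : 2 ≤ n) (hm2 : 2 ≤ m) (hG : G.Connected) (hH : H.Connected)
    (hk : distNum G = k) (hk' : distNum H = k')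
    (hcor : distNum (corona G H) = max k k') :
    cost (corona G H) (max k k') ≤ cost G k + n * cost H k' :=
  stmt_16_general G H n m k k' hn hm hn2 hm2 hG hk hk'
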